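/- arXiv:1510.05013 — 2 statements merged into one kernel-verified Lean document; each statement's English description precedes it below -/
import Mathlib

section
/- Let H be a Hopf algebra over a field k and A a unital left partial H-module algebra. If a ∈ A^{pH} (the invariant subalgebra) is invertible in A, then a^{-1} ∈ A^{pH}. -/
open TensorProduct

noncomputable section

variable (k : Type*) [Field k]

/-- The "Sweedler sum" `h ↦ Σ f(h₁) * g(h₂)`. -/
def sweedler {H A : Type*} [Ring H] [HopfAlgebra k H]
    [Ring A] [Algebra k A] (f g : H →ₗ[k] A) : H →ₗ[k] A :=
  (LinearMap.mul' k A) ∘ₗ (TensorProduct.map f g) ∘ₗ Coalgebra.comul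

/-- A (left) partial `H`-module algebra structure on a unital algebra `A`:
`1_H · a = a`, `h · (ab) = Σ (h₁·a)(h₂·b)` and `h·(g·b) = Σ (h₁·1)((h₂ g)·b)`. -/
structure PartialModuleAlgebra (H A : Type*) [Ring H] [HopfAlgebra k H]
    [Ring A] [Algebra k A] where
  act : H →ₗ[k] A →ₗ[k] A
  one_act : ∀ a : A, act 1 a = a
  act_mul : ∀ (h : H) (a b : A),
    act h (a * b) = sweedler k (act.flip a) (act.flip b) h
  act_act : ∀ (h g : H) (b : A),
    act h (act g b) =
      sweedler k (act.flip 1) ((act.flip b) ∘ₗ LinearMap.mulRight k g) h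

variable {H A : Type*} [Ring H] [HopfAlgebra k H] [Ring A] [Algebra k A]

/-- The set of invariant elements `A^{pH} = {a | h·a = a (h·1) for all h}`. -/
def pInvSet (ξ : PartialModuleAlgebra k H A) : Set A :=
  {a : A | ∀ h : H, ξ.act h a = a * ξ.act h 1}

lemma sweedler_mulLeft (c : A) (f g : H →ₗ[k] A) :
    sweedler k ((LinearMap.mulLeft k c) ∘ₗ f) g
      = (LinearMap.mulLeft k c) ∘ₗ sweedler k f g := by
  ext h
  simp only [sweedler, LinearMap.comp_apply, LinearMap.mulLeft_apply]
  induction (Coalgebra.comul (R := k) h) using TensorProduct.induction_on with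
  | zero => simp
  | tmul x y => simp [mul_assoc]
  | add x y hx hy => simp only [map_add, hx, hy, mul_add]

/-- If an invariant element is invertible in `A`, then its inverse is again invariant. -/
theorem inv_mem_pInvSet (ξ : PartialModuleAlgebra k H A) (u : Aˣ)
    (hu : (u : A) ∈ pInvSet k ξ) :
    ((u⁻¹ : Aˣ) : A) ∈ pInvSet k ξ := by
  intro h
  have key : ξ.act h ((u⁻¹ : Aˣ) : A)
      = sweedler k (ξ.act.flip 1) (ξ.act.flip ((u⁻¹ : Aˣ) : A)) h := by
    conv_lhs => rw [← ξ.one_act (((u⁻¹ : Aˣ) : A))]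
    rw [ξ.act_act]
    congr 1
    ext x
    simp
  have flipu : ξ.act.flip ((u : Aˣ) : A)
      = (LinearMap.mulLeft k ((u : Aˣ) : A)) ∘ₗ ξ.act.flip 1 := by
    ext g
    simpa using hu g
  have h1 : ξ.act h 1
      = (u : A) * sweedler k (ξ.act.flip 1) (ξ.act.flip ((u⁻¹ : Aˣ) : A)) h := by
    have e1 : (1 : A) = (u : A) * ((u⁻¹ : Aˣ) : A) := by simp
    rw [show ξ.act h 1 = ξ.act h ((u : A) * ((u⁻¹ : Aˣ) : A)) by rw [← e1],
      ξ.act_mul, flipu, sweedler_mulLeft]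
    rfl
  rw [key, h1, ← mul_assoc]
  simp
end
end

section
/- Let B be an H-module algebra (global action) and A a right ideal of B possessing an identity element 1_A (i.e., 1_A·a = a = a·1_A for all a ∈ A). Then the map h·a := 1_A(h▹a), where ▹ is the action of H on B, makes A a left partial H-module algebra. -/
open TensorProduct

noncomputable section

variable (k : Type*) [Field k]

/-- A (global) `H`-module algebra structure on a unital algebra `B`. -/
structure ModuleAlgebra (H B : Type*) [Ring H] [HopfAlgebra k H]
    [Ring B] [Algebra k B] where
  act : H →ₗ[k] B →ₗ[k] B
  one_act : ∀ b : B, act 1 b = b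
  mul_act : ∀ (h g : H) (b : B), act (h * g) b = act h (act g b)
  act_mul : ∀ (h : H) (a b : B),
    act h (a * b) = sweedler k (act.flip a) (act.flip b) h
  act_one : ∀ h : H, act h (1 : B) = (Coalgebra.counit h : k) • (1 : B)

variable {H B : Type*} [Ring H] [HopfAlgebra k H] [Ring B] [Algebra k B]

lemma mul_sweedler (e : B) (hkey : ∀ x y : B, e * (x * y) = (e * x) * (e * y))
    (f g : H →ₗ[k] B) (h : H) :
    e * sweedler k f g h =
      sweedler k ((LinearMap.mulLeft k e) ∘ₗ f) ((LinearMap.mulLeft k e) ∘ₗ g) h := by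
  simp only [sweedler, LinearMap.comp_apply]
  have : ∀ t : H ⊗[k] H,
      e * LinearMap.mul' k B (TensorProduct.map f g t) =
        LinearMap.mul' k B
          (TensorProduct.map ((LinearMap.mulLeft k e) ∘ₗ f) ((LinearMap.mulLeft k e) ∘ₗ g) t) := by
    intro t
    induction t using TensorProduct.induction_on with
    | zero => simp
    | tmul x y => simp [hkey]
    | add x y hx hy => simp [mul_add, hx, hy]
  exact this _

/-- Let `B` be a (global) `H`-module algebra and `A` a right ideal of `B` with an identity
element `e = 1_A`.  Then `h · a := e (h ▹ a)` makes `A` a left partial `H`-module algebra: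
the action preserves `A`, and the axioms (PA1), (PA3), (PA4) hold (with `1_A = e`). -/
theorem inducedPartialAction (θ : ModuleAlgebra k H B) (A : Submodule k B)
    (hA : ∀ a ∈ A, ∀ b : B, a * b ∈ A)
    (e : B) (he : e ∈ A) (heL : ∀ a ∈ A, e * a = a) (heR : ∀ a ∈ A, a * e = a) :
    -- the induced partial action preserves `A`
    (∀ (h : H), ∀ a ∈ A, e * θ.act h a ∈ A) ∧
    -- (PA1): `1_H · a = a`
    (∀ a ∈ A, e * θ.act 1 a = a) ∧
    -- (PA3): `h · (ab) = Σ (h₁ · a)(h₂ · b)`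
    (∀ (h : H), ∀ a ∈ A, ∀ b ∈ A,
      e * θ.act h (a * b) =
        sweedler k ((LinearMap.mulLeft k e) ∘ₗ θ.act.flip a)
          ((LinearMap.mulLeft k e) ∘ₗ θ.act.flip b) h) ∧
    -- (PA4): `h · (g · b) = Σ (h₁ · 1_A)((h₂ g) · b)`
    (∀ (h g : H), ∀ b ∈ A,
      e * θ.act h (e * θ.act g b) =
        sweedler k ((LinearMap.mulLeft k e) ∘ₗ θ.act.flip e)
          ((LinearMap.mulLeft k e) ∘ₗ (θ.act.flip b) ∘ₗ LinearMap.mulRight k g) h) := by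
  have hkey : ∀ x y : B, e * (x * y) = (e * x) * (e * y) := by
    intro x y
    have h1 : (e * x) * e = e * x := heR _ (hA e he x)
    rw [← mul_assoc]
    conv_lhs => rw [← h1]
    rw [mul_assoc]
  refine ⟨fun h a _ => hA e he _, fun a ha => by rw [θ.one_act, heL a ha], ?_, ?_⟩
  · intro h a _ b _
    rw [θ.act_mul, mul_sweedler k e hkey]
  · intro h g b _
    rw [θ.act_mul, mul_sweedler k e hkey]
    have hgs : (LinearMap.mulLeft k e ∘ₗ θ.act.flip ((θ.act g) b)) =
        (LinearMap.mulLeft k e ∘ₗ θ.act.flip b ∘ₗ LinearMap.mulRight k g) := by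
      apply LinearMap.ext
      intro x
      simp only [LinearMap.comp_apply, LinearMap.flip_apply, LinearMap.mulLeft_apply,
        LinearMap.mulRight_apply, θ.mul_act]
    rw [hgs]
end
end
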